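/- arXiv:1904.05277 — 2 statements merged into one kernel-verified Lean document; each statement's English description precedes it below -/
import Mathlib

section
/- Let ε > 0 and k ≥ 1. Then there exists a constant C = C(ε, k) such that for all N, the integral over the region Γ_{k,N} = {(ξ_1,…,ξ_k) ∈ (ℝ²)^k : |ξ_ℓ| ≤ N for all ℓ} of ⟨ξ_1 + ⋯ + ξ_k⟩^{−ε} ∏_{ℓ=1}^k ⟨ξ_ℓ⟩^{−2} dξ_1⋯dξ_k is bounded by C, uniformly in N. -/
/-!
Write `w s x = (1 + ‖x‖) ^ (-s)`; up to constants the integrand is at most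
`w ε (∑ ℓ, ξ ℓ) * ∏ ℓ, w 2 (ξ ℓ)`, and its integral over all of `(ℝ²)^k` is finite.
Integrating out one variable at a time, everything reduces to
`∫ w 2 x * w β (η + x) dx ≲ w (β / 4) η`. Peetre's inequality `w c x * w c (η + x) ≤ w c η`
with `c = β / 4` extracts the decay in `η`; the remaining factor `w (2 - c) x * w (β - c) (η + x)`
is at most `w (2 + β / 2) x + w (2 + β / 2) (η + x)` (compare both factors at the point of smaller
norm), which is integrable on `ℝ²` because `2 + β / 2 > 2`.
-/

open MeasureTheory Module Real
open scoped ENNReal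

noncomputable def bracketWeight {E : Type*} [Norm E] (s : ℝ) (x : E) : ℝ≥0∞ :=
  ENNReal.ofReal ((1 + ‖x‖) ^ (-s))

theorem bracketWeight_ne_top {E : Type*} [Norm E] (s : ℝ) (x : E) : bracketWeight s x ≠ ∞ :=
  ENNReal.ofReal_ne_top

section Pointwise

variable {E : Type*} [NormedAddCommGroup E]

theorem bracketWeight_add (s t : ℝ) (x : E) :
    bracketWeight (s + t) x = bracketWeight s x * bracketWeight t x := by
  rw [bracketWeight, bracketWeight, bracketWeight, ← ENNReal.ofReal_mul (by positivity),
    ← rpow_add (by positivity), neg_add]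

@[simp]
theorem bracketWeight_apply_zero (s : ℝ) : bracketWeight s (0 : E) = 1 := by
  simp [bracketWeight]

@[simp]
theorem bracketWeight_neg (s : ℝ) (x : E) : bracketWeight s (-x) = bracketWeight s x := by
  simp [bracketWeight]

theorem bracketWeight_le_of_norm_le {s : ℝ} (hs : 0 ≤ s) {x y : E} (h : ‖x‖ ≤ ‖y‖) :
    bracketWeight s y ≤ bracketWeight s x :=
  ENNReal.ofReal_le_ofReal <| rpow_le_rpow_of_nonpos (by positivity) (by linarith) (by linarith)

theorem bracketWeight_mul_le_add {s : ℝ} (hs : 0 ≤ s) (x y : E) :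
    bracketWeight s x * bracketWeight s y ≤ bracketWeight s (x + y) := by
  have hxy : 1 + ‖x + y‖ ≤ (1 + ‖x‖) * (1 + ‖y‖) := by
    nlinarith [norm_add_le x y, norm_nonneg x, norm_nonneg y]
  rw [bracketWeight, bracketWeight, bracketWeight, ← ENNReal.ofReal_mul (by positivity),
    ← mul_rpow (by positivity) (by positivity)]
  exact ENNReal.ofReal_le_ofReal <| rpow_le_rpow_of_nonpos (by positivity) hxy (by linarith)

theorem bracketWeight_mul_le {s t : ℝ} (hs : 0 ≤ s) (ht : 0 ≤ t) (x y : E) :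
    bracketWeight s x * bracketWeight t y ≤
      bracketWeight (s + t) x + bracketWeight (s + t) y := by
  rcases le_total ‖x‖ ‖y‖ with h | h
  · calc bracketWeight s x * bracketWeight t y ≤ bracketWeight s x * bracketWeight t x := by
          gcongr; exact bracketWeight_le_of_norm_le ht h
      _ ≤ _ := (bracketWeight_add s t x).ge.trans le_self_add
  · calc bracketWeight s x * bracketWeight t y ≤ bracketWeight s y * bracketWeight t y := by
          gcongr; exact bracketWeight_le_of_norm_le hs h
      _ ≤ _ := (bracketWeight_add s t y).ge.trans le_add_self

end Pointwise

theorem measurable_bracketWeight {E : Type*} [NormedAddCommGroup E] [MeasurableSpace E]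
    [OpensMeasurableSpace E] (s : ℝ) : Measurable (bracketWeight s : E → ℝ≥0∞) := by
  unfold bracketWeight
  fun_prop

theorem lintegral_pi_fin_succ_le {α : Type*} [MeasurableSpace α] (μ : Measure α) [SigmaFinite μ]
    {n : ℕ} (f : (Fin (n + 1) → α) → ℝ≥0∞) :
    ∫⁻ x, f x ∂Measure.pi (fun _ => μ) ≤
      ∫⁻ y, ∫⁻ z, f (Fin.cons y z) ∂Measure.pi (fun _ => μ) ∂μ := by
  rw [← (measurePreserving_piFinSuccAbove (fun _ => μ) 0).symm.lintegral_comp_emb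
    (MeasurableEquiv.measurableEmbedding _)]
  refine (lintegral_prod_le _).trans_eq ?_
  simp [Fin.insertNthEquiv, Fin.insertNth_zero']

theorem lintegral_bracketWeight_mul_add_le {E : Type*} [NormedAddCommGroup E]
    [MeasurableSpace E] [OpensMeasurableSpace E] [MeasurableAdd E] {μ : Measure E}
    [μ.IsAddLeftInvariant] {s t c : ℝ} (hc : 0 ≤ c) (hcs : c ≤ s) (hct : c ≤ t) (η : E) :
    ∫⁻ x, bracketWeight s x * bracketWeight t (η + x) ∂μ ≤
      2 * (∫⁻ x, bracketWeight (s + t - 2 * c) x ∂μ) * bracketWeight c η := by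
  set w := bracketWeight (E := E) (s + t - 2 * c)
  have hpt : ∀ x, bracketWeight s x * bracketWeight t (η + x) ≤
      bracketWeight c η * (w x + w (η + x)) := by
    intro x
    have hs' := bracketWeight_add c (s - c) x
    have ht' := bracketWeight_add c (t - c) (η + x)
    rw [add_sub_cancel] at hs' ht'
    calc bracketWeight s x * bracketWeight t (η + x)
        = bracketWeight c (-x) * bracketWeight c (η + x) *
            (bracketWeight (s - c) x * bracketWeight (t - c) (η + x)) := by
          rw [hs', ht', bracketWeight_neg]; ring
      _ ≤ bracketWeight c η * (w x + w (η + x)) := by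
          gcongr
          · simpa using bracketWeight_mul_le_add hc (-x) (η + x)
          · have hst : s - c + (t - c) = s + t - 2 * c := by ring
            simpa only [hst] using
              bracketWeight_mul_le (sub_nonneg.2 hcs) (sub_nonneg.2 hct) x (η + x)
  calc ∫⁻ x, bracketWeight s x * bracketWeight t (η + x) ∂μ
      ≤ ∫⁻ x, bracketWeight c η * (w x + w (η + x)) ∂μ := lintegral_mono hpt
    _ = bracketWeight c η * ((∫⁻ x, w x ∂μ) + ∫⁻ x, w (η + x) ∂μ) := by
        rw [lintegral_const_mul' _ _ (bracketWeight_ne_top c η),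
          lintegral_add_left (measurable_bracketWeight _)]
    _ = 2 * (∫⁻ x, w x ∂μ) * bracketWeight c η := by
        rw [lintegral_add_left_eq_self (fun x => w x) η]; ring

section Iterated

variable {E : Type*} [NormedAddCommGroup E] [NormedSpace ℝ E] [FiniteDimensional ℝ E]
  [MeasurableSpace E] [BorelSpace E] {μ : Measure E} [μ.IsAddHaarMeasure]

theorem lintegral_bracketWeight_sum_mul_prod_le {a b : ℝ} (ha : (finrank ℝ E : ℝ) ≤ a)
    (hb : 0 < b) (hba : b ≤ 4 * a) (k : ℕ) :
    ∃ C < ∞, ∀ η : E,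
      ∫⁻ ξ, bracketWeight b (η + ∑ ℓ, ξ ℓ) * ∏ ℓ, bracketWeight a (ξ ℓ)
          ∂Measure.pi (fun _ : Fin k => μ) ≤ C * bracketWeight (b / 4 ^ k) η := by
  induction k with
  | zero =>
    refine ⟨1, ENNReal.one_lt_top, fun η => ?_⟩
    simp
  | succ k ih =>
    obtain ⟨C, hC, hη⟩ := ih
    set b' := b / 4 ^ k
    have hb' : 0 < b' := by positivity
    have hb'b : b' ≤ b := div_le_self hb.le (one_le_pow₀ (by norm_num))
    refine ⟨C * (2 * ∫⁻ x, bracketWeight (a + b' - 2 * (b' / 4)) x ∂μ), ?_, fun η => ?_⟩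
    · refine ENNReal.mul_lt_top hC (ENNReal.mul_lt_top (by norm_num) ?_)
      exact finite_integral_one_add_norm (by linarith)
    calc ∫⁻ ξ, bracketWeight b (η + ∑ ℓ, ξ ℓ) * ∏ ℓ, bracketWeight a (ξ ℓ)
          ∂Measure.pi (fun _ : Fin (k + 1) => μ)
        ≤ ∫⁻ y, bracketWeight a y * ∫⁻ z, bracketWeight b ((η + y) + ∑ ℓ, z ℓ) *
            ∏ ℓ, bracketWeight a (z ℓ) ∂Measure.pi (fun _ : Fin k => μ) ∂μ := by
          refine (lintegral_pi_fin_succ_le μ _).trans_eq (lintegral_congr fun y => ?_)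
          rw [← lintegral_const_mul' _ _ (bracketWeight_ne_top a y)]
          simp only [Fin.sum_univ_succ, Fin.prod_univ_succ, Fin.cons_zero, Fin.cons_succ,
            add_assoc]
          congr 1 with z
          ring
      _ ≤ ∫⁻ y, bracketWeight a y * (C * bracketWeight b' (η + y)) ∂μ := by
          gcongr with y
          exact hη (η + y)
      _ = C * ∫⁻ y, bracketWeight a y * bracketWeight b' (η + y) ∂μ := by
          rw [← lintegral_const_mul' _ _ hC.ne]
          congr 1 with y
          ring
      _ ≤ C * (2 * (∫⁻ x, bracketWeight (a + b' - 2 * (b' / 4)) x ∂μ) *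
            bracketWeight (b' / 4) η) := by
          gcongr
          exact lintegral_bracketWeight_mul_add_le (by positivity) (by linarith) (by linarith) η
      _ = _ := by
          rw [pow_succ, ← div_div]; ring

end Iterated

section JapaneseBracket

variable {E : Type*} [NormedAddCommGroup E]

theorem ofReal_one_add_norm_sq_rpow_le {r b : ℝ} (hb : 0 < b) (hbr : b ≤ r) (x : E) :
    ENNReal.ofReal ((1 + ‖x‖ ^ 2) ^ (-r / 2)) ≤
      ENNReal.ofReal (2 ^ (b / 2)) * bracketWeight b x := by
  rw [bracketWeight, ← ENNReal.ofReal_mul (by positivity)]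
  refine ENNReal.ofReal_le_ofReal ((rpow_le_rpow_of_exponent_le ?_ ?_).trans
    (rpow_neg_one_add_norm_sq_le x hb))
  · have := sq_nonneg ‖x‖; linarith
  · linarith

theorem ofReal_bracket_sum_mul_prod_le {ε b : ℝ} (hb : 0 < b) (hbε : b ≤ ε) {k : ℕ}
    (ξ : Fin k → E) :
    ENNReal.ofReal ((1 + ‖∑ ℓ, ξ ℓ‖ ^ 2) ^ (-ε / 2) * ∏ ℓ, (1 + ‖ξ ℓ‖ ^ 2)⁻¹) ≤
      ENNReal.ofReal (2 ^ (b / 2) * 2 ^ k) *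
        (bracketWeight b (∑ ℓ, ξ ℓ) * ∏ ℓ, bracketWeight 2 (ξ ℓ)) := by
  have hinv : ∀ x : E, (1 + ‖x‖ ^ 2)⁻¹ = (1 + ‖x‖ ^ 2) ^ (-2 / 2 : ℝ) := fun x => by
    rw [show (-2 / 2 : ℝ) = -1 by norm_num, rpow_neg_one]
  rw [ENNReal.ofReal_mul (by positivity),
    ENNReal.ofReal_prod_of_nonneg (fun ℓ _ => by positivity), ENNReal.ofReal_mul (by positivity),
    ENNReal.ofReal_pow (by norm_num)]
  calc _ ≤ ENNReal.ofReal (2 ^ (b / 2)) * bracketWeight b (∑ ℓ, ξ ℓ) *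
        ∏ ℓ, (ENNReal.ofReal (2 ^ (2 / 2 : ℝ)) * bracketWeight 2 (ξ ℓ)) := by
        gcongr with ℓ
        · exact ofReal_one_add_norm_sq_rpow_le hb hbε _
        · rw [hinv]; exact ofReal_one_add_norm_sq_rpow_le two_pos le_rfl _
    _ = _ := by
        rw [Finset.prod_mul_distrib, Finset.prod_const, Finset.card_univ, Fintype.card_fin]
        norm_num
        ring

end JapaneseBracket

theorem setIntegral_le_toReal_lintegral_ofReal {α : Type*} [MeasurableSpace α] {μ : Measure α}
    {f : α → ℝ} (hf : 0 ≤ f) (hfin : ∫⁻ x, ENNReal.ofReal (f x) ∂μ ≠ ∞) (s : Set α) :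
    ∫ x in s, f x ∂μ ≤ (∫⁻ x, ENNReal.ofReal (f x) ∂μ).toReal := by
  refine (le_norm_self _).trans ((norm_integral_le_lintegral_norm f).trans ?_)
  simp_rw [Real.norm_of_nonneg (hf _)]
  exact ENNReal.toReal_mono hfin (setLIntegral_le_lintegral _ _)

theorem lintegral_ofReal_bracket_sum_mul_prod_lt_top {E : Type*} [NormedAddCommGroup E]
    [NormedSpace ℝ E] [FiniteDimensional ℝ E] [MeasurableSpace E] [BorelSpace E]
    {μ : Measure E} [μ.IsAddHaarMeasure] (hE : finrank ℝ E ≤ 2) {ε : ℝ} (hε : 0 < ε) (k : ℕ) :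
    ∫⁻ ξ, ENNReal.ofReal ((1 + ‖∑ ℓ, ξ ℓ‖ ^ 2) ^ (-ε / 2) * ∏ ℓ, (1 + ‖ξ ℓ‖ ^ 2)⁻¹)
      ∂Measure.pi (fun _ : Fin k => μ) < ∞ := by
  set b := min ε 1
  have hb : 0 < b := lt_min hε one_pos
  obtain ⟨C, hC, hbound⟩ := lintegral_bracketWeight_sum_mul_prod_le (μ := μ) (a := 2)
    (by exact_mod_cast hE) hb (by linarith [min_le_right ε 1]) k
  calc _ ≤ ∫⁻ ξ, ENNReal.ofReal (2 ^ (b / 2) * 2 ^ k) *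
        (bracketWeight b (∑ ℓ, ξ ℓ) * ∏ ℓ, bracketWeight 2 (ξ ℓ)) ∂Measure.pi (fun _ => μ) :=
        lintegral_mono fun ξ => ofReal_bracket_sum_mul_prod_le hb (min_le_left ε 1) ξ
    _ ≤ ENNReal.ofReal (2 ^ (b / 2) * 2 ^ k) * C := by
        rw [lintegral_const_mul' _ _ ENNReal.ofReal_ne_top]
        simpa using mul_le_mul_right (hbound 0) _
    _ < ∞ := ENNReal.mul_lt_top ENNReal.ofReal_lt_top hC

theorem convolution_integral_uniform_bound_general (ε : ℝ) (hε : 0 < ε) (k : ℕ) :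
    ∃ C : ℝ, 0 < C ∧ ∀ N : ℝ,
      (∫ ξ in {ξ : Fin k → EuclideanSpace ℝ (Fin 2) | ∀ ℓ, ‖ξ ℓ‖ ≤ N},
          (1 + ‖∑ ℓ, ξ ℓ‖ ^ 2) ^ (-ε / 2) * ∏ ℓ, (1 + ‖ξ ℓ‖ ^ 2)⁻¹)
        ≤ C := by
  have hfinite := lintegral_ofReal_bracket_sum_mul_prod_lt_top
    (μ := (volume : Measure (EuclideanSpace ℝ (Fin 2)))) (by simp) hε k
  rw [← volume_pi] at hfinite
  refine ⟨_, ?_, fun N => (setIntegral_le_toReal_lintegral_ofReal (fun ξ => by positivity)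
    hfinite.ne _).trans (lt_add_one _).le⟩
  positivity

/-- for `ε > 0` and `k ≥ 1` there is `C = C(ε,k)` such that, uniformly in `N`,
`∫_{Γ_{k,N}} ⟨ξ₁+⋯+ξ_k⟩^{−ε} ∏_ℓ ⟨ξ_ℓ⟩^{−2} dξ ≤ C`, where
`Γ_{k,N} = {(ξ₁,…,ξ_k) ∈ (ℝ²)^k : |ξ_ℓ| ≤ N for all ℓ}` and `⟨ξ⟩ = (1+|ξ|²)^{1/2}`. -/
theorem convolution_integral_uniform_bound (ε : ℝ) (hε : 0 < ε) (k : ℕ) (hk : 1 ≤ k) :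
    ∃ C : ℝ, 0 < C ∧ ∀ N : ℝ,
      (∫ ξ in {ξ : Fin k → EuclideanSpace ℝ (Fin 2) | ∀ ℓ, ‖ξ ℓ‖ ≤ N},
          (1 + ‖∑ ℓ, ξ ℓ‖ ^ 2) ^ (-ε / 2) * ∏ ℓ, (1 + ‖ξ ℓ‖ ^ 2)⁻¹)
        ≤ C :=
  convolution_integral_uniform_bound_general ε hε k
end

section
/- Let {λ_n} be a sequence of nonnegative reals satisfying Weyl's law #{n : λ_n ≤ λ} ∼ λ² as λ → ∞, and let {c_n} be nonnegative reals with ∑_n 1_{(Λ,Λ+1]}(λ_n) c_n ≤ C ∑_n 1_{(Λ,Λ+1]}(λ_n)/(1+λ_n²) for all Λ. Suppose ψ₀ is a smooth cutoff supported in [−1,1] with ψ₀ ≡ 1 on [−1/2, 1/2]. Then ∑_n ψ₀(N^{−2}λ_n²)² c_n = O(log N) as N → ∞. -/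
/-- logarithmic bound on the regularized sum. Suppose `{λ_n}` satisfies Weyl's
law `#{n : λ_n ≤ λ} ∼ λ²`, the nonnegative reals `c_n` satisfy
`∑_{Λ<λ_n≤Λ+1} c_n ≤ C ∑_{Λ<λ_n≤Λ+1} 1/(1+λ_n²)` for all `Λ`, and `ψ₀` is a smooth cutoff
supported in `[−1,1]` with `ψ₀ ≡ 1` on `[−1/2,1/2]`. Then
`∑_n ψ₀(N^{−2}λ_n²)² c_n = O(log N)` as `N → ∞`. -/
theorem regularized_sum_log_bound
    (lam : ℕ → ℝ) (hlam : ∀ n, 0 ≤ lam n)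
    (hfin : ∀ Λ : ℝ, {n | lam n ≤ Λ}.Finite)
    (c₁ c₂ : ℝ) (hc₁ : 0 < c₁) (hc₂ : 0 < c₂)
    (hweyl : ∀ Λ : ℝ, 1 ≤ Λ →
      c₁ * Λ ^ 2 ≤ (Nat.card {n : ℕ | lam n ≤ Λ} : ℝ)
        ∧ (Nat.card {n : ℕ | lam n ≤ Λ} : ℝ) ≤ c₂ * Λ ^ 2)
    (c : ℕ → ℝ) (hc : ∀ n, 0 ≤ c n)
    (C : ℝ)
    (hwin : ∀ Λ : ℝ,
      (∑' n, Set.indicator {n | Λ < lam n ∧ lam n ≤ Λ + 1} c n)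
        ≤ C * ∑' n, Set.indicator {n | Λ < lam n ∧ lam n ≤ Λ + 1}
            (fun n => 1 / (1 + lam n ^ 2)) n)
    (ψ₀ : ℝ → ℝ) (hψsmooth : ContDiff ℝ (⊤ : ℕ∞) ψ₀)
    (hψsupp : Function.support ψ₀ ⊆ Set.Icc (-1) 1)
    (hψone : Set.EqOn ψ₀ 1 (Set.Icc (-(1/2)) (1/2))) :
    ∃ C' : ℝ, 0 < C' ∧ ∀ N : ℝ, 2 ≤ N →
      (∑' n, ψ₀ (N⁻¹ ^ 2 * lam n ^ 2) ^ 2 * c n) ≤ C' * Real.log N := by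
  classical
  set w : ℕ → ℝ := fun n => 1 / (1 + lam n ^ 2) with hwdef
  have hw0 : ∀ n, 0 < w n := by
    intro n
    have : (0:ℝ) < 1 + lam n ^ 2 := by positivity
    positivity
  have hw1 : ∀ n, w n ≤ 1 := by
    intro n
    have h1 : (1:ℝ) ≤ 1 + lam n ^ 2 := by nlinarith [sq_nonneg (lam n)]
    simpa [hwdef] using (div_le_one (by linarith)).2 h1
  set s : ℝ → Finset ℕ := fun a => (hfin a).toFinset with hsdef
  have hmem : ∀ (a : ℝ) (n : ℕ), n ∈ s a ↔ lam n ≤ a := by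
    intro a n; simp [hsdef, Set.Finite.mem_toFinset]
  have hsub : ∀ a b : ℝ, a ≤ b → s a ⊆ s b := by
    intro a b hab n hn
    rw [hmem] at hn ⊢; linarith
  -- cardinality bound from Weyl
  have hcard : ∀ a : ℝ, 1 ≤ a → ((s a).card : ℝ) ≤ c₂ * a ^ 2 := by
    intro a ha
    have h := (hweyl a ha).2
    have hcc : Nat.card {n : ℕ | lam n ≤ a} = (s a).card := by
      rw [Nat.card_coe_set_eq, Set.ncard_eq_toFinset_card _ (hfin a)]
    rwa [hcc] at h
  -- windows as finsets
  set Cp : ℝ := max C 0 with hCpdef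
  have hCp0 : 0 ≤ Cp := le_max_right _ _
  have hwinfin : ∀ Λ : ℝ,
      (∑ n ∈ (s (Λ+1)).filter (fun n => Λ < lam n), c n)
        ≤ Cp * ∑ n ∈ (s (Λ+1)).filter (fun n => Λ < lam n), w n := by
    intro Λ
    have hzero : ∀ (g : ℕ → ℝ), ∀ n ∉ (s (Λ+1)).filter (fun n => Λ < lam n),
        Set.indicator {n | Λ < lam n ∧ lam n ≤ Λ + 1} g n = 0 := by
      intro g n hn
      apply Set.indicator_of_notMem
      intro hmem'
      simp only [Set.mem_setOf_eq] at hmem'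
      exact hn (Finset.mem_filter.2 ⟨(hmem (Λ+1) n).2 hmem'.2, hmem'.1⟩)
    have hconv : ∀ g : ℕ → ℝ,
        (∑' n, Set.indicator {n | Λ < lam n ∧ lam n ≤ Λ + 1} g n)
          = ∑ n ∈ (s (Λ+1)).filter (fun n => Λ < lam n), g n := by
      intro g
      rw [tsum_eq_sum (hzero g)]
      refine Finset.sum_congr rfl ?_
      intro n hn
      rcases Finset.mem_filter.1 hn with ⟨h1, h2⟩
      apply Set.indicator_of_mem _ g
      show Λ < lam n ∧ lam n ≤ Λ + 1
      exact ⟨h2, (hmem (Λ+1) n).1 h1⟩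
    have h := hwin Λ
    rw [hconv c, hconv w] at h
    have hwsum : 0 ≤ ∑ n ∈ (s (Λ+1)).filter (fun n => Λ < lam n), w n :=
      Finset.sum_nonneg fun n _ => (hw0 n).le
    calc (∑ n ∈ (s (Λ+1)).filter (fun n => Λ < lam n), c n)
        ≤ C * ∑ n ∈ (s (Λ+1)).filter (fun n => Λ < lam n), w n := h
      _ ≤ Cp * ∑ n ∈ (s (Λ+1)).filter (fun n => Λ < lam n), w n :=
          mul_le_mul_of_nonneg_right (le_max_left _ _) hwsum
  -- splitting lemma
  have hsplit : ∀ (a : ℝ) (g : ℕ → ℝ),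
      ∑ n ∈ s (a+1), g n
        = (∑ n ∈ (s (a+1)).filter (fun n => a < lam n), g n) + ∑ n ∈ s a, g n := by
    intro a g
    have hfn : (s (a+1)).filter (fun n => ¬ a < lam n) = s a := by
      ext n
      simp only [Finset.mem_filter, hmem, not_lt]
      constructor
      · rintro ⟨_, h2⟩; exact h2
      · intro h; exact ⟨by linarith, h⟩
    rw [← Finset.sum_filter_add_sum_filter_not (s (a+1)) (fun n => a < lam n) g, hfn]
  -- Lemma A : cumulative transfer
  have lemA : ∀ m : ℕ, (∑ n ∈ s (m : ℝ), c n) ≤ Cp * ∑ n ∈ s (m : ℝ), w n := by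
    intro m
    induction m with
    | zero =>
      have h := hwinfin (-1 : ℝ)
      have he : ((-1:ℝ) + 1) = (0:ℝ) := by norm_num
      have hfl : (s (0:ℝ)).filter (fun n => (-1:ℝ) < lam n) = s (0:ℝ) := by
        ext n
        simp only [Finset.mem_filter, hmem]
        exact ⟨fun ⟨h1, _⟩ => h1, fun h => ⟨h, by have := hlam n; linarith⟩⟩
      rw [he, hfl] at h
      simpa using h
    | succ m ih =>
      have hcast : ((m + 1 : ℕ) : ℝ) = (m : ℝ) + 1 := by push_cast; ring
      rw [hcast, hsplit (m : ℝ) c, hsplit (m : ℝ) w, mul_add]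
      exact add_le_add (hwinfin (m : ℝ)) ih
  -- Lemma C : dyadic bound on weights
  have lemC : ∀ J : ℕ, (∑ n ∈ s ((2:ℝ) ^ J), w n) ≤ c₂ * (1 + 4 * J) := by
    intro J
    induction J with
    | zero =>
      have hb : (∑ n ∈ s ((2:ℝ) ^ 0), w n) ≤ ((s ((2:ℝ)^0)).card : ℝ) * 1 := by
        rw [mul_one]
        calc (∑ n ∈ s ((2:ℝ) ^ 0), w n) ≤ ∑ n ∈ s ((2:ℝ)^0), (1:ℝ) :=
              Finset.sum_le_sum fun n _ => hw1 n
          _ = ((s ((2:ℝ)^0)).card : ℝ) := by simp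
      have hcd := hcard ((2:ℝ)^0) (by norm_num)
      simp only [pow_zero] at hb hcd ⊢
      push_cast
      nlinarith
    | succ J ih =>
      -- split s (2^(J+1)) over threshold 2^J ... not the same split form; do directly
      have hle : (2:ℝ) ^ J ≤ (2:ℝ) ^ (J+1) := by
        apply pow_le_pow_right₀ (by norm_num) (by omega)
      have hsplit2 : ∑ n ∈ s ((2:ℝ)^(J+1)), w n
          = (∑ n ∈ (s ((2:ℝ)^(J+1))).filter (fun n => (2:ℝ)^J < lam n), w n)
            + ∑ n ∈ (s ((2:ℝ)^(J+1))).filter (fun n => ¬ (2:ℝ)^J < lam n), w n :=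
        (Finset.sum_filter_add_sum_filter_not _ _ _).symm
      have hlow : (∑ n ∈ (s ((2:ℝ)^(J+1))).filter (fun n => ¬ (2:ℝ)^J < lam n), w n)
          ≤ ∑ n ∈ s ((2:ℝ)^J), w n := by
        apply Finset.sum_le_sum_of_subset_of_nonneg
        · intro n hn
          rcases Finset.mem_filter.1 hn with ⟨_, h2⟩
          rw [hmem]; exact not_lt.1 h2
        · intro n _ _; exact (hw0 n).le
      have hblk : (∑ n ∈ (s ((2:ℝ)^(J+1))).filter (fun n => (2:ℝ)^J < lam n), w n)
          ≤ 4 * c₂ := by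
        have hterm : ∀ n ∈ (s ((2:ℝ)^(J+1))).filter (fun n => (2:ℝ)^J < lam n),
            w n ≤ 1 / ((2:ℝ)^J)^2 := by
          intro n hn
          rcases Finset.mem_filter.1 hn with ⟨_, h2⟩
          have hp : (0:ℝ) < (2:ℝ)^J := by positivity
          have : ((2:ℝ)^J)^2 ≤ 1 + lam n ^ 2 := by nlinarith
          exact one_div_le_one_div_of_le (by positivity) this
        calc (∑ n ∈ (s ((2:ℝ)^(J+1))).filter (fun n => (2:ℝ)^J < lam n), w n)
            ≤ ∑ n ∈ (s ((2:ℝ)^(J+1))).filter (fun n => (2:ℝ)^J < lam n), 1 / ((2:ℝ)^J)^2 :=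
              Finset.sum_le_sum hterm
          _ = (((s ((2:ℝ)^(J+1))).filter (fun n => (2:ℝ)^J < lam n)).card : ℝ) * (1 / ((2:ℝ)^J)^2) := by
              rw [Finset.sum_const, nsmul_eq_mul]
          _ ≤ ((s ((2:ℝ)^(J+1))).card : ℝ) * (1 / ((2:ℝ)^J)^2) := by
              apply mul_le_mul_of_nonneg_right _ (by positivity)
              exact Nat.cast_le.mpr (Finset.card_le_card (Finset.filter_subset _ _))
          _ ≤ (c₂ * ((2:ℝ)^(J+1))^2) * (1 / ((2:ℝ)^J)^2) := by
              apply mul_le_mul_of_nonneg_right _ (by positivity)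
              exact hcard _ (one_le_pow₀ (by norm_num))
          _ = 4 * c₂ := by
              have hp : ((2:ℝ)^J) ≠ 0 := by positivity
              field_simp
              ring
      rw [hsplit2]
      have := add_le_add hblk (hlow.trans ih)
      push_cast
      push_cast at this
      nlinarith
  -- bound on ψ₀
  obtain ⟨M0, hM0⟩ := (isCompact_Icc (a := (-1:ℝ)) (b := 1)).exists_bound_of_continuousOn
    hψsmooth.continuous.continuousOn
  set Mb : ℝ := max M0 1 with hMbdef
  have hMb1 : (1:ℝ) ≤ Mb := le_max_right _ _
  have hMb : ∀ x : ℝ, ψ₀ x ^ 2 ≤ Mb ^ 2 := by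
    intro x
    by_cases hx : x ∈ Set.Icc (-1:ℝ) 1
    · have h1 : |ψ₀ x| ≤ Mb := (hM0 x hx).trans (le_max_left _ _)
      calc ψ₀ x ^ 2 = |ψ₀ x| ^ 2 := (sq_abs _).symm
        _ ≤ Mb ^ 2 := by nlinarith [abs_nonneg (ψ₀ x)]
    · have : ψ₀ x = 0 := by
        by_contra h
        exact hx (hψsupp h)
      rw [this]; nlinarith
  -- final constant
  refine ⟨max 1 (Mb^2 * Cp * c₂ * (9 / Real.log 2)), lt_of_lt_of_le one_pos (le_max_left _ _), ?_⟩
  intro N hN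
  have hN0 : (0:ℝ) < N := by linarith
  have hlog2 : (0:ℝ) < Real.log 2 := Real.log_pos (by norm_num)
  have hlogN : Real.log 2 ≤ Real.log N := Real.log_le_log (by norm_num) hN
  have hlogN0 : 0 < Real.log N := lt_of_lt_of_le hlog2 hlogN
  set J : ℕ := ⌈Real.logb 2 N⌉₊ with hJdef
  have hlb : Real.logb 2 N = Real.log N / Real.log 2 := (Real.log_div_log).symm
  have hlogb1 : (1:ℝ) ≤ Real.logb 2 N := by
    rw [hlb]
    exact (one_le_div hlog2).2 hlogN
  have hNle : N ≤ (2:ℝ) ^ J := by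
    have h1 : N = (2:ℝ) ^ (Real.logb 2 N) := (Real.rpow_logb (by norm_num) (by norm_num) hN0).symm
    have h2 : (2:ℝ) ^ (Real.logb 2 N) ≤ (2:ℝ) ^ ((J : ℝ)) :=
      Real.rpow_le_rpow_of_exponent_le (by norm_num) (Nat.le_ceil _)
    have h3 : (2:ℝ) ^ ((J:ℝ)) = (2:ℝ) ^ J := Real.rpow_natCast 2 J
    rw [h1]; rw [h3] at h2; exact h2
  have hJle : (J : ℝ) ≤ Real.logb 2 N + 1 := by
    have := Nat.ceil_lt_add_one (by linarith : (0:ℝ) ≤ Real.logb 2 N)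
    linarith
  -- tsum to finite sum
  have hzero : ∀ n ∉ s N, ψ₀ (N⁻¹ ^ 2 * lam n ^ 2) ^ 2 * c n = 0 := by
    intro n hn
    rw [hmem] at hn
    push_neg at hn
    have harg : 1 < N⁻¹ ^ 2 * lam n ^ 2 := by
      have h1 : N ^ 2 < lam n ^ 2 := by nlinarith [hlam n]
      have h2 : N⁻¹ ^ 2 * N ^ 2 = 1 := by field_simp
      calc (1:ℝ) = N⁻¹ ^ 2 * N ^ 2 := h2.symm
        _ < N⁻¹ ^ 2 * lam n ^ 2 := by
            apply mul_lt_mul_of_pos_left h1 (by positivity)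
    have hnot : N⁻¹ ^ 2 * lam n ^ 2 ∉ Set.Icc (-1:ℝ) 1 := by
      intro hmem'
      exact absurd hmem'.2 (not_le.2 harg)
    have hz : ψ₀ (N⁻¹ ^ 2 * lam n ^ 2) = 0 := by
      by_contra h
      exact hnot (hψsupp h)
    rw [hz]; ring
  rw [tsum_eq_sum hzero]
  have step1 : (∑ n ∈ s N, ψ₀ (N⁻¹ ^ 2 * lam n ^ 2) ^ 2 * c n)
      ≤ Mb ^ 2 * ∑ n ∈ s N, c n := by
    rw [Finset.mul_sum]
    exact Finset.sum_le_sum fun n _ => mul_le_mul_of_nonneg_right (hMb _) (hc n)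
  have step2 : (∑ n ∈ s N, c n) ≤ ∑ n ∈ s ((2:ℝ)^J), c n :=
    Finset.sum_le_sum_of_subset_of_nonneg (hsub _ _ hNle) fun n _ _ => hc n
  have hc2J : ((2:ℝ) ^ J) = (((2^J : ℕ) : ℝ)) := by push_cast; ring
  have step3 : (∑ n ∈ s ((2:ℝ)^J), c n) ≤ Cp * ∑ n ∈ s ((2:ℝ)^J), w n := by
    have := lemA (2^J)
    rwa [← hc2J] at this
  have step4 : (∑ n ∈ s ((2:ℝ)^J), w n) ≤ c₂ * (1 + 4 * J) := lemC J
  have hJlog : (1 : ℝ) + 4 * J ≤ 9 / Real.log 2 * Real.log N := by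
    have hJle2 : (J:ℝ) * Real.log 2 ≤ Real.log N + Real.log 2 := by
      have h := mul_le_mul_of_nonneg_right hJle hlog2.le
      rw [hlb] at h
      calc (J:ℝ) * Real.log 2 ≤ (Real.log N / Real.log 2 + 1) * Real.log 2 := h
        _ = Real.log N + Real.log 2 := by field_simp
    rw [div_mul_eq_mul_div, le_div_iff₀ hlog2]
    nlinarith [hJle2, hlogN, hlog2.le]
  have hfinal : (∑ n ∈ s N, ψ₀ (N⁻¹ ^ 2 * lam n ^ 2) ^ 2 * c n)
      ≤ Mb^2 * Cp * c₂ * (9 / Real.log 2) * Real.log N := by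
    have hMb2 : (0:ℝ) ≤ Mb ^ 2 := by positivity
    calc (∑ n ∈ s N, ψ₀ (N⁻¹ ^ 2 * lam n ^ 2) ^ 2 * c n)
        ≤ Mb ^ 2 * ∑ n ∈ s N, c n := step1
      _ ≤ Mb ^ 2 * (Cp * ∑ n ∈ s ((2:ℝ)^J), w n) :=
          mul_le_mul_of_nonneg_left (step2.trans step3) hMb2
      _ ≤ Mb ^ 2 * (Cp * (c₂ * (1 + 4 * J))) := by
          apply mul_le_mul_of_nonneg_left _ hMb2
          exact mul_le_mul_of_nonneg_left step4 hCp0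
      _ ≤ Mb ^ 2 * (Cp * (c₂ * (9 / Real.log 2 * Real.log N))) := by
          apply mul_le_mul_of_nonneg_left _ hMb2
          apply mul_le_mul_of_nonneg_left _ hCp0
          exact mul_le_mul_of_nonneg_left hJlog hc₂.le
      _ = Mb^2 * Cp * c₂ * (9 / Real.log 2) * Real.log N := by ring
  refine hfinal.trans ?_
  apply mul_le_mul_of_nonneg_right (le_max_right _ _) hlogN0.le
end
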